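/- Let d = 2^m with m ≥ 1. For every vector x ∈ ℝ^d there exist angles θ_k^r ∈ ℝ, for r = 1, …, m and k = 0, …, d/2^r − 1 (d − 1 angles in total, since ∑_{r=1}^{m} d/2^r = d − 1), such that, defining for each r the matrix P_r = ∏_{k=0}^{d/2^r − 1} G(2^r k, 2^{r−1}(2k+1); θ_k^r) — a product of Givens rotations whose index pairs are pairwise disjoint — one has P_m · P_{m−1} ⋯ P_1 · x = ‖x‖₂ · e_0, where e_0 is the first standard basis vector of ℝ^d. -/

import Mathlib

/-- The `d × d` Givens rotation matrix `G(i,j;θ)`: agrees with the identity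
matrix except `G i i = G j j = cos θ`, `G i j = -sin θ`, `G j i = sin θ`. -/
noncomputable def givens (d : ℕ) (i j : Fin d) (θ : ℝ) : Matrix (Fin d) (Fin d) ℝ :=
  Matrix.of fun k l =>
    if k = i ∧ l = i then Real.cos θ
    else if k = j ∧ l = j then Real.cos θ
    else if k = i ∧ l = j then -Real.sin θ
    else if k = j ∧ l = i then Real.sin θ
    else if k = l then 1 else 0

/-- The standard Euclidean (ℓ²) norm on `ℝ^d`. -/
noncomputable def l2norm {d : ℕ} (x : Fin d → ℝ) : ℝ :=
  Real.sqrt (∑ k, x k ^ 2)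

/-- In dimension `d = 2^m`, the first index `2^r · k` of the `k`-th Givens rotation in
the parallel stage `P_r` (here `r : Fin m` is zero-based, representing the paper's
stage `r + 1`, so the index is `2^(r+1) · k`). -/
def parIdxFst (m : ℕ) (r : Fin m) (k : Fin (2 ^ (m - 1 - (r : ℕ)))) : Fin (2 ^ m) :=
  ⟨2 ^ ((r : ℕ) + 1) * (k : ℕ), by
    have hk := k.isLt
    have hr := r.isLt
    calc 2 ^ ((r : ℕ) + 1) * (k : ℕ)
        < 2 ^ ((r : ℕ) + 1) * 2 ^ (m - 1 - (r : ℕ)) :=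
          mul_lt_mul_of_pos_left hk (by positivity)
      _ = 2 ^ m := by rw [← pow_add]; congr 1; omega⟩

/-- In dimension `d = 2^m`, the second index `2^(r-1) · (2k+1)` of the `k`-th Givens
rotation in the parallel stage `P_r` (here `r : Fin m` is zero-based, representing the
paper's stage `r + 1`, so the index is `2^r · (2k+1)`). -/
def parIdxSnd (m : ℕ) (r : Fin m) (k : Fin (2 ^ (m - 1 - (r : ℕ)))) : Fin (2 ^ m) :=
  ⟨2 ^ (r : ℕ) * (2 * (k : ℕ) + 1), by
    have hk := k.isLt
    have hr := r.isLt
    have h2 : 2 * 2 ^ (m - 1 - (r : ℕ)) = 2 ^ (m - (r : ℕ)) := by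
      rw [show m - (r : ℕ) = (m - 1 - (r : ℕ)) + 1 by omega, pow_succ]; ring
    have h1 : 2 * (k : ℕ) + 1 < 2 ^ (m - (r : ℕ)) := by omega
    calc 2 ^ (r : ℕ) * (2 * (k : ℕ) + 1)
        < 2 ^ (r : ℕ) * 2 ^ (m - (r : ℕ)) := mul_lt_mul_of_pos_left h1 (by positivity)
      _ = 2 ^ m := by rw [← pow_add]; congr 1; omega⟩

namespace ParallelGivensAux

noncomputable def ang (a b : ℝ) : ℝ := Complex.arg ⟨a, -b⟩

lemma ang_spec1 (a b : ℝ) :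
    Real.cos (ang a b) * a - Real.sin (ang a b) * b = Real.sqrt (a ^ 2 + b ^ 2) := by
  by_cases h : (⟨a, -b⟩ : ℂ) = 0
  · have ha : a = 0 := congrArg Complex.re h
    have hb : -b = 0 := congrArg Complex.im h
    have hb' : b = 0 := by linarith
    simp [ha, hb']
  · have habs : ‖(⟨a, -b⟩ : ℂ)‖ = Real.sqrt (a ^ 2 + b ^ 2) := by
      rw [Complex.norm_def, Complex.normSq_mk]; ring_nf
    have hc := Complex.cos_arg h
    have hs := Complex.sin_arg (⟨a, -b⟩ : ℂ)
    rw [ang, hc, hs, habs]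
    have hpos : 0 < Real.sqrt (a ^ 2 + b ^ 2) := by
      rw [← habs]; exact norm_pos_iff.mpr h
    have hρ2 : Real.sqrt (a ^ 2 + b ^ 2) * Real.sqrt (a ^ 2 + b ^ 2) = a ^ 2 + b ^ 2 :=
      Real.mul_self_sqrt (by positivity)
    simp only [Complex.re, Complex.im] at *
    field_simp
    nlinarith [hρ2]

lemma ang_spec2 (a b : ℝ) :
    Real.sin (ang a b) * a + Real.cos (ang a b) * b = 0 := by
  by_cases h : (⟨a, -b⟩ : ℂ) = 0
  · have ha : a = 0 := congrArg Complex.re h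
    have hb : -b = 0 := congrArg Complex.im h
    have hb' : b = 0 := by linarith
    simp [ha, hb']
  · have hc := Complex.cos_arg h
    have hs := Complex.sin_arg (⟨a, -b⟩ : ℂ)
    rw [ang, hc, hs]
    simp only [Complex.re, Complex.im] at *
    ring

lemma givens_mulVec {d : ℕ} (i j : Fin d) (hij : i ≠ j) (θ : ℝ) (y : Fin d → ℝ) :
    (givens d i j θ).mulVec y = fun k =>
      if k = i then Real.cos θ * y i - Real.sin θ * y j
      else if k = j then Real.sin θ * y i + Real.cos θ * y j
      else y k := by
  funext k
  simp only [Matrix.mulVec, dotProduct, givens, Matrix.of_apply]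
  by_cases hk1 : k = i
  · subst hk1
    have hsum : ∀ l : Fin d,
        (if k = k ∧ l = k then Real.cos θ
        else if k = j ∧ l = j then Real.cos θ
        else if k = k ∧ l = j then -Real.sin θ
        else if k = j ∧ l = k then Real.sin θ
        else if k = l then 1 else 0) * y l =
        (if l = k then Real.cos θ * y k else 0) + (if l = j then -(Real.sin θ) * y j else 0) := by
      intro l
      by_cases h1 : l = k <;> by_cases h2 : l = j <;>
        simp_all [hij, eq_comm]
    rw [Finset.sum_congr rfl fun l _ => hsum l, Finset.sum_add_distrib]
    simp [Finset.sum_ite_eq']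
    ring
  · by_cases hk2 : k = j
    · subst hk2
      have hsum : ∀ l : Fin d,
          (if k = i ∧ l = i then Real.cos θ
          else if k = k ∧ l = k then Real.cos θ
          else if k = i ∧ l = k then -Real.sin θ
          else if k = k ∧ l = i then Real.sin θ
          else if k = l then 1 else 0) * y l =
          (if l = i then Real.sin θ * y i else 0) + (if l = k then Real.cos θ * y k else 0) := by
        intro l
        by_cases h1 : l = k <;> by_cases h2 : l = i <;>
          simp_all [hk1, eq_comm]
      rw [Finset.sum_congr rfl fun l _ => hsum l, Finset.sum_add_distrib]
      simp [Finset.sum_ite_eq', hk1]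
    · have hsum : ∀ l : Fin d,
          (if k = i ∧ l = i then Real.cos θ
          else if k = j ∧ l = j then Real.cos θ
          else if k = i ∧ l = j then -Real.sin θ
          else if k = j ∧ l = i then Real.sin θ
          else if k = l then 1 else 0) * y l =
          (if l = k then y k else 0) := by
        intro l
        by_cases h1 : l = k <;> simp_all [eq_comm]
      rw [Finset.sum_congr rfl fun l _ => hsum l]
      simp [Finset.sum_ite_eq', hk1, hk2]

lemma prod_givens_mulVec {d : ℕ} (L : List ((Fin d × Fin d) × ℝ))
    (hne : ∀ p ∈ L, p.1.1 ≠ p.1.2)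
    (hdisj : L.Pairwise fun p q =>
      p.1.1 ≠ q.1.1 ∧ p.1.1 ≠ q.1.2 ∧ p.1.2 ≠ q.1.1 ∧ p.1.2 ≠ q.1.2)
    (y : Fin d → ℝ) :
    (∀ p ∈ L,
      (L.map fun p => givens d p.1.1 p.1.2 p.2).prod.mulVec y p.1.1
        = Real.cos p.2 * y p.1.1 - Real.sin p.2 * y p.1.2 ∧
      (L.map fun p => givens d p.1.1 p.1.2 p.2).prod.mulVec y p.1.2
        = Real.sin p.2 * y p.1.1 + Real.cos p.2 * y p.1.2) ∧
    ∀ i : Fin d, (∀ p ∈ L, i ≠ p.1.1 ∧ i ≠ p.1.2) →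
      (L.map fun p => givens d p.1.1 p.1.2 p.2).prod.mulVec y i = y i := by
  induction L with
  | nil => simp [Matrix.mulVec_one]
  | cons a L ih =>
    obtain ⟨hhead, hpair⟩ := List.pairwise_cons.mp hdisj
    obtain ⟨ihtouch, ihfix⟩ := ih (fun p hp => hne p (List.mem_cons_of_mem a hp)) hpair
    have hz : (((a :: L).map fun p => givens d p.1.1 p.1.2 p.2).prod).mulVec y
        = (givens d a.1.1 a.1.2 a.2).mulVec
            ((L.map fun p => givens d p.1.1 p.1.2 p.2).prod.mulVec y) := by
      simp [Matrix.mulVec_mulVec]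
    set z := (L.map fun p => givens d p.1.1 p.1.2 p.2).prod.mulVec y with hzdef
    have hz1 : z a.1.1 = y a.1.1 := ihfix a.1.1 (fun q hq => ⟨(hhead q hq).1, (hhead q hq).2.1⟩)
    have hz2 : z a.1.2 = y a.1.2 := ihfix a.1.2 (fun q hq => ⟨(hhead q hq).2.2.1, (hhead q hq).2.2.2⟩)
    have hG := givens_mulVec a.1.1 a.1.2 (hne a (List.mem_cons_self)) a.2 z
    constructor
    · intro p hp
      rcases List.mem_cons.mp hp with rfl | hp'
      · rw [hz, hG]
        simp [hne p (List.mem_cons_self), hz1, hz2]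
        exact fun h => absurd h.symm (hne p (List.mem_cons_self))
      · have h1 : p.1.1 ≠ a.1.1 := ((hhead p hp').1).symm
        have h2 : p.1.1 ≠ a.1.2 := ((hhead p hp').2.2.1).symm
        have h3 : p.1.2 ≠ a.1.1 := ((hhead p hp').2.1).symm
        have h4 : p.1.2 ≠ a.1.2 := ((hhead p hp').2.2.2).symm
        rw [hz, hG]
        simp only [h1, h2, h3, h4, if_neg]
        exact ihtouch p hp'
    · intro i hi
      have h1 : i ≠ a.1.1 := (hi a (List.mem_cons_self)).1
      have h2 : i ≠ a.1.2 := (hi a (List.mem_cons_self)).2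
      rw [hz, hG]
      simp only [h1, h2, if_neg]
      exact ihfix i (fun p hp => hi p (List.mem_cons_of_mem a hp))

lemma mem_ofFn' {α : Type*} {n : ℕ} (f : Fin n → α) (p : α) :
    p ∈ List.ofFn f ↔ ∃ k, f k = p := by
  rw [List.mem_ofFn]

lemma reverse_prod_mulVec {d : ℕ} (M : List (Matrix (Fin d) (Fin d) ℝ)) (x : Fin d → ℝ) :
    M.reverse.prod.mulVec x = M.foldl (fun v A => A.mulVec v) x := by
  induction M generalizing x with
  | nil => simp [Matrix.one_mulVec]
  | cons A M ih =>
    simp only [List.reverse_cons, List.prod_append, List.prod_cons, List.prod_nil,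
      mul_one, List.foldl_cons]
    rw [← Matrix.mulVec_mulVec]
    exact ih (A.mulVec x)

/-- Extension of `x` to `ℕ`. -/
noncomputable def X (m : ℕ) (x : Fin (2 ^ m) → ℝ) (i : ℕ) : ℝ :=
  if h : i < 2 ^ m then x ⟨i, h⟩ else 0

/-- The stage-`r` matrix with angles computed from the current vector `v`. -/
noncomputable def stageMat (m : ℕ) (r : Fin m) (v : Fin (2 ^ m) → ℝ) :
    Matrix (Fin (2 ^ m)) (Fin (2 ^ m)) ℝ :=
  (List.ofFn fun k : Fin (2 ^ (m - 1 - (r : ℕ))) =>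
    givens (2 ^ m) (parIdxFst m r k) (parIdxSnd m r k)
      (ang (v (parIdxFst m r k)) (v (parIdxSnd m r k)))).prod

/-- The intermediate vectors. -/
noncomputable def yv (m : ℕ) (x : Fin (2 ^ m) → ℝ) : ℕ → Fin (2 ^ m) → ℝ
  | 0 => x
  | r + 1 => if h : r < m then (stageMat m ⟨r, h⟩ (yv m x r)).mulVec (yv m x r) else yv m x r

lemma parIdx_ne (m : ℕ) (r : Fin m) (k : Fin (2 ^ (m - 1 - (r : ℕ)))) :
    parIdxFst m r k ≠ parIdxSnd m r k := by
  apply Fin.ne_of_val_ne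
  show 2 ^ ((r : ℕ) + 1) * (k : ℕ) ≠ 2 ^ (r : ℕ) * (2 * (k : ℕ) + 1)
  have hP : 0 < 2 ^ (r : ℕ) := by positivity
  rw [pow_succ]
  intro h
  have : 2 ^ (r : ℕ) * (2 * (k : ℕ)) = 2 ^ (r : ℕ) * (2 * (k : ℕ) + 1) := by ring_nf; ring_nf at h; omega
  have := Nat.eq_of_mul_eq_mul_left hP this
  omega

lemma parIdx_disj (m : ℕ) (r : Fin m) (k k' : Fin (2 ^ (m - 1 - (r : ℕ)))) (hkk : k ≠ k') :
    parIdxFst m r k ≠ parIdxFst m r k' ∧ parIdxFst m r k ≠ parIdxSnd m r k' ∧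
    parIdxSnd m r k ≠ parIdxFst m r k' ∧ parIdxSnd m r k ≠ parIdxSnd m r k' := by
  have hP : 0 < 2 ^ (r : ℕ) := by positivity
  have hv : (k : ℕ) ≠ (k' : ℕ) := fun h => hkk (Fin.ext h)
  refine ⟨Fin.ne_of_val_ne ?_, Fin.ne_of_val_ne ?_, Fin.ne_of_val_ne ?_, Fin.ne_of_val_ne ?_⟩
  · show 2 ^ ((r : ℕ) + 1) * (k : ℕ) ≠ 2 ^ ((r : ℕ) + 1) * (k' : ℕ)
    intro h
    exact hv (Nat.eq_of_mul_eq_mul_left (by positivity) h)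
  · show 2 ^ ((r : ℕ) + 1) * (k : ℕ) ≠ 2 ^ (r : ℕ) * (2 * (k' : ℕ) + 1)
    rw [pow_succ]
    intro h
    have h2 : 2 ^ (r : ℕ) * (2 * (k : ℕ)) = 2 ^ (r : ℕ) * (2 * (k' : ℕ) + 1) := by
      ring_nf; ring_nf at h; omega
    have := Nat.eq_of_mul_eq_mul_left hP h2
    omega
  · show 2 ^ (r : ℕ) * (2 * (k : ℕ) + 1) ≠ 2 ^ ((r : ℕ) + 1) * (k' : ℕ)
    rw [pow_succ]
    intro h
    have h2 : 2 ^ (r : ℕ) * (2 * (k : ℕ) + 1) = 2 ^ (r : ℕ) * (2 * (k' : ℕ)) := by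
      ring_nf; ring_nf at h; omega
    have := Nat.eq_of_mul_eq_mul_left hP h2
    omega
  · show 2 ^ (r : ℕ) * (2 * (k : ℕ) + 1) ≠ 2 ^ (r : ℕ) * (2 * (k' : ℕ) + 1)
    intro h
    have := Nat.eq_of_mul_eq_mul_left hP h
    omega

lemma dvd_parIdxFst (m : ℕ) (r : Fin m) (k : Fin (2 ^ (m - 1 - (r : ℕ)))) :
    2 ^ (r : ℕ) ∣ ((parIdxFst m r k : Fin (2 ^ m)) : ℕ) := by
  show 2 ^ (r : ℕ) ∣ 2 ^ ((r : ℕ) + 1) * (k : ℕ)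
  exact Dvd.dvd.mul_right (pow_dvd_pow 2 (Nat.le_succ _)) _

lemma dvd_parIdxSnd (m : ℕ) (r : Fin m) (k : Fin (2 ^ (m - 1 - (r : ℕ)))) :
    2 ^ (r : ℕ) ∣ ((parIdxSnd m r k : Fin (2 ^ m)) : ℕ) :=
  Dvd.intro _ rfl

end ParallelGivensAux

namespace ParallelGivensAux

lemma stage_apply (m : ℕ) (x : Fin (2 ^ m) → ℝ) (r : ℕ) (hr : r < m) :
    (∀ k : Fin (2 ^ (m - 1 - r)),
      yv m x (r + 1) (parIdxFst m ⟨r, hr⟩ k)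
        = Real.sqrt (yv m x r (parIdxFst m ⟨r, hr⟩ k) ^ 2
            + yv m x r (parIdxSnd m ⟨r, hr⟩ k) ^ 2) ∧
      yv m x (r + 1) (parIdxSnd m ⟨r, hr⟩ k) = 0) ∧
    ∀ i : Fin (2 ^ m), ¬ (2 ^ r ∣ (i : ℕ)) → yv m x (r + 1) i = yv m x r i := by
  set v := yv m x r with hv
  set rr : Fin m := ⟨r, hr⟩ with hrr
  set L : List ((Fin (2 ^ m) × Fin (2 ^ m)) × ℝ) :=
    List.ofFn fun k : Fin (2 ^ (m - 1 - r)) =>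
      ((parIdxFst m rr k, parIdxSnd m rr k), ang (v (parIdxFst m rr k)) (v (parIdxSnd m rr k)))
    with hL
  have hmat : stageMat m rr v = (L.map fun p => givens (2 ^ m) p.1.1 p.1.2 p.2).prod := by
    rw [hL, List.map_ofFn]
    rfl
  have hne : ∀ p ∈ L, p.1.1 ≠ p.1.2 := by
    intro p hp
    obtain ⟨k, rfl⟩ := (mem_ofFn' _ _).mp hp
    exact parIdx_ne m rr k
  have hdisj : L.Pairwise fun p q =>
      p.1.1 ≠ q.1.1 ∧ p.1.1 ≠ q.1.2 ∧ p.1.2 ≠ q.1.1 ∧ p.1.2 ≠ q.1.2 := by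
    rw [hL, List.pairwise_ofFn]
    intro k k' hkk
    exact parIdx_disj m rr k k' (ne_of_lt hkk)
  obtain ⟨htouch, hfix⟩ := prod_givens_mulVec L hne hdisj v
  have hy : yv m x (r + 1) = (L.map fun p => givens (2 ^ m) p.1.1 p.1.2 p.2).prod.mulVec v := by
    show (if h : r < m then (stageMat m ⟨r, h⟩ (yv m x r)).mulVec (yv m x r) else yv m x r) = _
    rw [dif_pos hr, ← hmat]
  constructor
  · intro k
    have hmem : ((parIdxFst m rr k, parIdxSnd m rr k),
        ang (v (parIdxFst m rr k)) (v (parIdxSnd m rr k))) ∈ L :=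
      (mem_ofFn' _ _).mpr ⟨k, rfl⟩
    obtain ⟨h1, h2⟩ := htouch _ hmem
    constructor
    · rw [hy]
      exact h1.trans (ang_spec1 _ _)
    · rw [hy]
      exact h2.trans (ang_spec2 _ _)
  · intro i hi
    rw [hy]
    apply hfix
    intro p hp
    obtain ⟨k, rfl⟩ := (mem_ofFn' _ _).mp hp
    constructor
    · intro h
      exact hi (h ▸ dvd_parIdxFst m rr k)
    · intro h
      exact hi (h ▸ dvd_parIdxSnd m rr k)

lemma inv_lemma (m : ℕ) (x : Fin (2 ^ m) → ℝ) (r : ℕ) : r ≤ m →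
    (∀ i : Fin (2 ^ m), 2 ^ r ∣ (i : ℕ) →
      yv m x r i ^ 2 = ∑ t ∈ Finset.range (2 ^ r), X m x ((i : ℕ) + t) ^ 2) ∧
    (∀ i : Fin (2 ^ m), ¬ 2 ^ r ∣ (i : ℕ) → yv m x r i = 0) ∧
    (1 ≤ r → ∀ i : Fin (2 ^ m), 0 ≤ yv m x r i) := by
  induction r with
  | zero =>
    intro _
    refine ⟨?_, ?_, ?_⟩
    · intro i _
      simp [yv, X, i.isLt, Finset.sum_range_one]
    · intro i hi
      exact absurd (one_dvd _) hi
    · omega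
  | succ r ih =>
    intro hr1
    have hr : r < m := by omega
    obtain ⟨ia, ib, _⟩ := ih (by omega)
    obtain ⟨hstep, hfix⟩ := stage_apply m x r hr
    have key : ∀ i : Fin (2 ^ m),
        (2 ^ (r + 1) ∣ (i : ℕ) →
          yv m x (r + 1) i
            = Real.sqrt (∑ t ∈ Finset.range (2 ^ (r + 1)), X m x ((i : ℕ) + t) ^ 2)) ∧
        (¬ 2 ^ (r + 1) ∣ (i : ℕ) → yv m x (r + 1) i = 0) := by
      intro i
      by_cases h1 : 2 ^ (r + 1) ∣ (i : ℕ)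
      · obtain ⟨c, hc⟩ := h1
        have hclt : c < 2 ^ (m - 1 - r) := by
          have h2m : (2 : ℕ) ^ m = 2 ^ (r + 1) * 2 ^ (m - 1 - r) := by
            rw [← pow_add]; congr 1; omega
          have hlt : 2 ^ (r + 1) * c < 2 ^ (r + 1) * 2 ^ (m - 1 - r) := by
            rw [← h2m, ← hc]; exact i.isLt
          exact Nat.lt_of_mul_lt_mul_left hlt
        have hiFst : i = parIdxFst m ⟨r, hr⟩ ⟨c, hclt⟩ := Fin.ext hc
        have hBval : ((parIdxSnd m ⟨r, hr⟩ ⟨c, hclt⟩ : Fin (2 ^ m)) : ℕ) = (i : ℕ) + 2 ^ r := by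
          show 2 ^ r * (2 * c + 1) = (i : ℕ) + 2 ^ r
          rw [hc, pow_succ]; ring
        constructor
        · intro _
          rw [hiFst, (hstep ⟨c, hclt⟩).1]
          congr 1
          have hA2 : yv m x r (parIdxFst m ⟨r, hr⟩ ⟨c, hclt⟩) ^ 2
              = ∑ t ∈ Finset.range (2 ^ r), X m x ((i : ℕ) + t) ^ 2 := by
            rw [← hiFst]
            exact ia i (dvd_trans (pow_dvd_pow 2 (Nat.le_succ r)) ⟨c, hc⟩)
          have hB2 : yv m x r (parIdxSnd m ⟨r, hr⟩ ⟨c, hclt⟩) ^ 2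
              = ∑ t ∈ Finset.range (2 ^ r), X m x (((i : ℕ) + 2 ^ r) + t) ^ 2 := by
            rw [← hBval]
            exact ia _ (dvd_parIdxSnd m ⟨r, hr⟩ ⟨c, hclt⟩)
          rw [hA2, hB2, ← hiFst]
          rw [show (2 : ℕ) ^ (r + 1) = 2 ^ r + 2 ^ r by rw [pow_succ]; omega,
            Finset.sum_range_add]
          congr 1
          refine Finset.sum_congr rfl fun t _ => ?_
          rw [← Nat.add_assoc]
        · intro h
          exact absurd ⟨c, hc⟩ h
      · by_cases h2 : 2 ^ r ∣ (i : ℕ)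
        · obtain ⟨q, hq⟩ := h2
          have hqodd : q % 2 = 1 := by
            rcases Nat.even_or_odd q with he | ho
            · obtain ⟨c, hc2⟩ := he
              exact absurd ⟨c, by rw [hq, pow_succ, hc2]; ring⟩ h1
            · obtain ⟨c, hc2⟩ := ho
              omega
          set k := q / 2 with hk
          have hq2 : q = 2 * k + 1 := by omega
          have hklt : k < 2 ^ (m - 1 - r) := by
            have h2m : (2 : ℕ) ^ m = 2 ^ r * (2 * 2 ^ (m - 1 - r)) := by
              rw [show 2 * 2 ^ (m - 1 - r) = 2 ^ (m - r) by
                rw [show m - r = (m - 1 - r) + 1 by omega, pow_succ]; ring]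
              rw [← pow_add]; congr 1; omega
            have hlt := i.isLt
            rw [hq, h2m] at hlt
            have := Nat.lt_of_mul_lt_mul_left hlt
            omega
          have hiSnd : i = parIdxSnd m ⟨r, hr⟩ ⟨k, hklt⟩ := by
            apply Fin.ext
            show (i : ℕ) = 2 ^ r * (2 * k + 1)
            rw [hq, hq2]
          refine ⟨fun h => absurd h h1, fun _ => ?_⟩
          rw [hiSnd]
          exact (hstep ⟨k, hklt⟩).2
        · have h1' : ¬ 2 ^ (r + 1) ∣ (i : ℕ) := h1
          refine ⟨fun h => absurd h h1, fun _ => ?_⟩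
          rw [hfix i h2]
          exact ib i h2
    refine ⟨?_, ?_, ?_⟩
    · intro i hi
      rw [(key i).1 hi]
      rw [Real.sq_sqrt (by positivity)]
    · intro i hi
      exact (key i).2 hi
    · intro _ i
      by_cases hi : 2 ^ (r + 1) ∣ (i : ℕ)
      · rw [(key i).1 hi]; exact Real.sqrt_nonneg _
      · rw [(key i).2 hi]

end ParallelGivensAux

namespace ParallelGivensAux

lemma yv_eq_prod (m : ℕ) (x : Fin (2 ^ m) → ℝ) :
    ((List.ofFn fun r : Fin m => stageMat m r (yv m x (r : ℕ))).reverse.prod).mulVec x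
      = yv m x m := by
  set P : Fin m → Matrix (Fin (2 ^ m)) (Fin (2 ^ m)) ℝ :=
    fun r => stageMat m r (yv m x (r : ℕ)) with hPdef
  have hfold : ∀ j, j ≤ m →
      ((List.ofFn P).take j).foldl (fun v A => A.mulVec v) x = yv m x j := by
    intro j
    induction j with
    | zero => intro _; simp [yv]
    | succ j ihj =>
      intro hj
      have hjm : j < m := hj
      rw [List.take_succ]
      have hget : (List.ofFn P)[j]? = some (P ⟨j, hjm⟩) := by
        simp [List.getElem?_ofFn, hjm]
      rw [hget]
      simp only [Option.toList_some]
      rw [List.foldl_append, ihj (by omega)]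
      show (P ⟨j, hjm⟩).mulVec (yv m x j) = yv m x (j + 1)
      conv_rhs => rw [yv]
      rw [dif_pos hjm]
  have htake : (List.ofFn P).take m = List.ofFn P :=
    List.take_of_length_le (by rw [List.length_ofFn])
  rw [reverse_prod_mulVec, ← htake]
  exact hfold m le_rfl

lemma yv_final (m : ℕ) (hm : 1 ≤ m) (x : Fin (2 ^ m) → ℝ) :
    yv m x m = l2norm x • (fun l : Fin (2 ^ m) => if (l : ℕ) = 0 then (1 : ℝ) else 0) := by
  obtain ⟨Ia, Ib, Ic⟩ := inv_lemma m x m le_rfl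
  funext i
  by_cases hi : (i : ℕ) = 0
  · have hdvd : 2 ^ m ∣ (i : ℕ) := by rw [hi]; exact dvd_zero _
    have h2 := Ia i hdvd
    have h0 := Ic hm i
    have hval : yv m x m i = Real.sqrt (∑ t ∈ Finset.range (2 ^ m), X m x ((i : ℕ) + t) ^ 2) := by
      rw [← Real.sqrt_sq h0, h2]
    have hXx : ∀ k : Fin (2 ^ m), X m x (k : ℕ) = x k := fun k => by simp [X, k.isLt]
    have hsum : ∑ k : Fin (2 ^ m), x k ^ 2
        = ∑ t ∈ Finset.range (2 ^ m), X m x ((i : ℕ) + t) ^ 2 := by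
      rw [show ∑ k : Fin (2 ^ m), x k ^ 2 = ∑ k : Fin (2 ^ m), X m x (k : ℕ) ^ 2 from
        Finset.sum_congr rfl fun k _ => by rw [hXx]]
      rw [Fin.sum_univ_eq_sum_range (fun t => X m x t ^ 2)]
      exact Finset.sum_congr rfl fun t _ => by rw [hi, Nat.zero_add]
    rw [hval]
    simp only [Pi.smul_apply, smul_eq_mul, if_pos hi, mul_one, l2norm]
    rw [hsum]
  · have hnd : ¬ 2 ^ m ∣ (i : ℕ) := by
      intro h
      have h1 := Nat.le_of_dvd (Nat.pos_of_ne_zero hi) h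
      have h2 := i.isLt
      omega
    rw [Ib i hnd]
    simp only [Pi.smul_apply, smul_eq_mul, if_neg hi, mul_zero]

end ParallelGivensAux

/-- Parallel Givens rotation strategy: for `d = 2^m`, `m ≥ 1`, and any `x ∈ ℝ^d`,
there are `d - 1` angles `θ_k^r` (for stages `r = 1, …, m`, with `d / 2^r` rotations
in stage `r`) such that, with `P_r = ∏_k G(2^r k, 2^{r-1}(2k+1); θ_k^r)` (a product
of Givens rotations with pairwise disjoint index pairs),
`P_m ⋯ P_1 x = ‖x‖₂ • e₀`.  Stage `r : Fin m` below is zero-based. -/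
theorem parallel_givens_to_e0 (m : ℕ) (hm : 1 ≤ m) (x : Fin (2 ^ m) → ℝ) :
    ∃ θ : (r : Fin m) → Fin (2 ^ (m - 1 - (r : ℕ))) → ℝ,
      ((List.ofFn fun r : Fin m =>
          (List.ofFn fun k : Fin (2 ^ (m - 1 - (r : ℕ))) =>
            givens (2 ^ m) (parIdxFst m r k) (parIdxSnd m r k) (θ r k)).prod
        ).reverse.prod).mulVec x
        = l2norm x • (fun l : Fin (2 ^ m) => if (l : ℕ) = 0 then (1 : ℝ) else 0) := by
  refine ⟨fun r k => ParallelGivensAux.ang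
      (ParallelGivensAux.yv m x (r : ℕ) (parIdxFst m r k))
      (ParallelGivensAux.yv m x (r : ℕ) (parIdxSnd m r k)), ?_⟩
  exact (ParallelGivensAux.yv_eq_prod m x).trans (ParallelGivensAux.yv_final m hm x)
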